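/- arXiv:1004.4305 — 3 statements merged into one kernel-verified Lean document; each statement's English description precedes it below -/
import Mathlib

section
/- Let λ₁, λ₂ > 0 and let ξ : [t', t'+ε] → ℝ^d be a piecewise-C¹ path vanishing at both endpoints. Then ∫_{t'}^{t'+ε} (λ₁ |ξ'(τ)|² − λ₂ |ξ(τ)|²) dτ ≥ (λ₁/ε − ε λ₂) · sup_{τ∈[t',t'+ε]} |ξ(τ)|². In particular, if ε < √(λ₁/λ₂), this quantity is strictly positive whenever ξ is not identically zero. -/
/-!
Since `ξ` vanishes at `t'`, the fundamental theorem of calculus and Cauchy–Schwarz give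
`|ξ(τ)|² ≤ (τ - t') ∫ |ξ'|² ≤ ε ∫ |ξ'|²` for every `τ`, so `∫ |ξ'|² ≥ (sup |ξ|)² / ε`, while
trivially `∫ |ξ|² ≤ ε (sup |ξ|)²`.
-/

open MeasureTheory

/-- A piecewise-C¹ path on `[a,b]` together with its (piecewise) derivative `ξ'`. -/
def PiecewiseC1On {d : ℕ} (ξ ξ' : ℝ → EuclideanSpace ℝ (Fin d)) (a b : ℝ) : Prop :=
  ContinuousOn ξ (Set.Icc a b) ∧
  ∃ S : Finset ℝ,
    (∀ τ ∈ Set.Icc a b \ S, HasDerivAt ξ (ξ' τ) τ) ∧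
    ContinuousOn ξ' (Set.Icc a b \ S) ∧
    IntervalIntegrable ξ' volume a b ∧
    IntervalIntegrable (fun τ => ‖ξ' τ‖ ^ 2) volume a b

open Set

theorem sq_integral_le_measureReal_univ_mul_integral_sq {α : Type*} [MeasurableSpace α]
    {μ : Measure α} [IsFiniteMeasure μ] {f : α → ℝ} (hf : Integrable f μ)
    (hf2 : Integrable (fun x => f x ^ 2) μ) :
    (∫ x, f x ∂μ) ^ 2 ≤ μ.real univ * ∫ x, f x ^ 2 ∂μ := by
  set m := μ.real univ
  set I := ∫ x, f x ∂μ
  set J := ∫ x, f x ^ 2 ∂μ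
  rcases measureReal_nonneg.eq_or_lt with hm | hm
  · have hμ : μ = 0 := Measure.measure_univ_eq_zero.mp ((measureReal_eq_zero_iff).mp hm.symm)
    simp [I, J, m, hμ]
  · -- `m f - I` has mean zero, so its square integrates to `m (m J - I²) ≥ 0`.
    have hexpand : ∫ x, (m * f x - I) ^ 2 ∂μ = m * (m * J - I ^ 2) := by
      have hsq : ∀ x, (m * f x - I) ^ 2 = m ^ 2 * f x ^ 2 - 2 * m * I * f x + I ^ 2 :=
        fun x => by ring
      simp_rw [hsq]
      rw [integral_add (by fun_prop) (by fun_prop), integral_sub (by fun_prop) (by fun_prop),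
        integral_const_mul, integral_const_mul, integral_const, smul_eq_mul]
      ring
    have hnonneg : 0 ≤ m * (m * J - I ^ 2) :=
      hexpand ▸ integral_nonneg fun x => sq_nonneg (m * f x - I)
    exact sub_nonneg.mp (nonneg_of_mul_nonneg_right hnonneg hm)

theorem sq_intervalIntegral_le_mul_intervalIntegral_sq {a b : ℝ} (hab : a ≤ b) {g : ℝ → ℝ}
    (hg : IntervalIntegrable g volume a b)
    (hg2 : IntervalIntegrable (fun x => g x ^ 2) volume a b) :
    (∫ x in a..b, g x) ^ 2 ≤ (b - a) * ∫ x in a..b, g x ^ 2 := by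
  simpa [intervalIntegral.integral_of_le hab, Real.volume_real_Ioc_of_le hab] using
    sq_integral_le_measureReal_univ_mul_integral_sq hg.1 hg2.1

section

variable {E : Type*} [NormedAddCommGroup E] {f : ℝ → E} {a b : ℝ}

theorem ContinuousOn.isGreatest_sSup_norm_image_Icc (hab : a ≤ b)
    (hc : ContinuousOn f (Icc a b)) :
    IsGreatest ((fun τ => ‖f τ‖) '' Icc a b) (sSup ((fun τ => ‖f τ‖) '' Icc a b)) :=
  (isCompact_Icc.image_of_continuousOn hc.norm).isGreatest_sSup ((nonempty_Icc.2 hab).image _)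

theorem ContinuousOn.intervalIntegrable_norm_sq (hab : a ≤ b) (hc : ContinuousOn f (Icc a b)) :
    IntervalIntegrable (fun τ => ‖f τ‖ ^ 2) volume a b :=
  ContinuousOn.intervalIntegrable_of_Icc (u := fun τ => ‖f τ‖ ^ 2) hab (hc.norm.pow 2)

theorem intervalIntegral_norm_sq_le_mul_sq_sSup (hab : a ≤ b) (hc : ContinuousOn f (Icc a b)) :
    ∫ τ in a..b, ‖f τ‖ ^ 2 ≤ (b - a) * sSup ((fun τ => ‖f τ‖) '' Icc a b) ^ 2 := by
  simpa using intervalIntegral.integral_mono_on hab (hc.intervalIntegrable_norm_sq hab)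
    intervalIntegrable_const fun τ hτ => pow_le_pow_left₀ (norm_nonneg _)
      ((hc.isGreatest_sSup_norm_image_Icc hab).2 (mem_image_of_mem _ hτ)) 2

variable [NormedSpace ℝ E] [CompleteSpace E] {f' : ℝ → E} {s : Set ℝ}

theorem norm_sq_le_mul_intervalIntegral_norm_deriv_sq (hs : s.Countable)
    (hc : ContinuousOn f (Icc a b)) (hd : ∀ x ∈ Ioo a b \ s, HasDerivAt f (f' x) x)
    (hi : IntervalIntegrable f' volume a b)
    (hi2 : IntervalIntegrable (fun x => ‖f' x‖ ^ 2) volume a b) (ha : f a = 0) {τ : ℝ}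
    (hτ : τ ∈ Icc a b) :
    ‖f τ‖ ^ 2 ≤ (b - a) * ∫ x in a..b, ‖f' x‖ ^ 2 := by
  obtain ⟨haτ, hτb⟩ := hτ
  have hsub : uIcc a τ ⊆ uIcc a b := uIcc_subset_uIcc_left (Icc_subset_uIcc ⟨haτ, hτb⟩)
  have hftc : f τ = ∫ x in a..τ, f' x := by
    rw [integral_eq_of_hasDerivAt_off_countable_of_le f f' haτ hs
      (hc.mono (Icc_subset_Icc_right hτb))
      (fun x hx => hd x ⟨Ioo_subset_Ioo_right hτb hx.1, hx.2⟩) (hi.mono_set hsub), ha, sub_zero]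
  calc ‖f τ‖ ^ 2 ≤ (∫ x in a..τ, ‖f' x‖) ^ 2 := by
        rw [hftc]
        gcongr
        exact intervalIntegral.norm_integral_le_integral_norm haτ
    _ ≤ (τ - a) * ∫ x in a..τ, ‖f' x‖ ^ 2 :=
        sq_intervalIntegral_le_mul_intervalIntegral_sq haτ (hi.mono_set hsub).norm
          (hi2.mono_set hsub)
    _ ≤ (b - a) * ∫ x in a..b, ‖f' x‖ ^ 2 := by
        refine mul_le_mul (by linarith) ?_ ?_ (by linarith)
        · exact intervalIntegral.integral_mono_interval le_rfl haτ hτb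
            (Filter.Eventually.of_forall fun x => sq_nonneg _) hi2
        · exact intervalIntegral.integral_nonneg haτ fun x _ => sq_nonneg _

theorem mul_sq_sSup_norm_le_intervalIntegral (hs : s.Countable)
    (hc : ContinuousOn f (Icc a b)) (hd : ∀ x ∈ Ioo a b \ s, HasDerivAt f (f' x) x)
    (hi : IntervalIntegrable f' volume a b)
    (hi2 : IntervalIntegrable (fun x => ‖f' x‖ ^ 2) volume a b) (ha : f a = 0) (hab : a < b)
    {lam₁ lam₂ : ℝ} (hlam₁ : 0 ≤ lam₁) (hlam₂ : 0 ≤ lam₂) :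
    (lam₁ / (b - a) - (b - a) * lam₂) * sSup ((fun τ => ‖f τ‖) '' Icc a b) ^ 2 ≤
      ∫ τ in a..b, (lam₁ * ‖f' τ‖ ^ 2 - lam₂ * ‖f τ‖ ^ 2) := by
  have hK : sSup ((fun τ => ‖f τ‖) '' Icc a b) ^ 2 ≤ (b - a) * ∫ x in a..b, ‖f' x‖ ^ 2 := by
    obtain ⟨τ₀, hτ₀, hτ₀M⟩ := (hc.isGreatest_sSup_norm_image_Icc hab.le).1
    exact hτ₀M ▸ norm_sq_le_mul_intervalIntegral_norm_deriv_sq hs hc hd hi hi2 ha hτ₀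
  have hL := intervalIntegral_norm_sq_le_mul_sq_sSup hab.le hc
  have hba : 0 < b - a := sub_pos.2 hab
  rw [intervalIntegral.integral_sub (hi2.const_mul lam₁)
      ((hc.intervalIntegrable_norm_sq hab.le).const_mul lam₂),
    intervalIntegral.integral_const_mul, intervalIntegral.integral_const_mul, sub_mul]
  gcongr ?_ - ?_
  · rw [div_mul_eq_mul_div, div_le_iff₀ hba]
    nlinarith
  · rw [mul_assoc, mul_left_comm]
    exact mul_le_mul_of_nonneg_left hL hlam₂

end

theorem stmt_7_general {d : ℕ} (t' ε lam₁ lam₂ : ℝ) (hε : 0 < ε)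
    (hlam₁ : 0 < lam₁) (hlam₂ : 0 < lam₂)
    (ξ ξ' : ℝ → EuclideanSpace ℝ (Fin d))
    (hpc : PiecewiseC1On ξ ξ' t' (t' + ε))
    (h0 : ξ t' = 0) :
    (lam₁ / ε - ε * lam₂) * (sSup ((fun τ => ‖ξ τ‖) '' Set.Icc t' (t' + ε))) ^ 2 ≤
      (∫ τ in t'..t' + ε, (lam₁ * ‖ξ' τ‖ ^ 2 - lam₂ * ‖ξ τ‖ ^ 2)) ∧
    (ε < Real.sqrt (lam₁ / lam₂) → (∃ τ ∈ Set.Icc t' (t' + ε), ξ τ ≠ 0) →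
      0 < ∫ τ in t'..t' + ε, (lam₁ * ‖ξ' τ‖ ^ 2 - lam₂ * ‖ξ τ‖ ^ 2)) := by
  obtain ⟨hcont, S, hderiv, -, hint, hint2⟩ := hpc
  have hmain := mul_sq_sSup_norm_le_intervalIntegral S.countable_toSet hcont
    (fun x hx => hderiv x ⟨Ioo_subset_Icc_self hx.1, hx.2⟩) hint hint2 h0
    (lt_add_of_pos_right t' hε) hlam₁.le hlam₂.le
  rw [add_sub_cancel_left] at hmain
  refine ⟨hmain, fun hsmall ⟨τ₁, hτ₁, hξτ₁⟩ => lt_of_lt_of_le ?_ hmain⟩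
  have hcoef : 0 < lam₁ / ε - ε * lam₂ := by
    have : ε ^ 2 * lam₂ < lam₁ := (lt_div_iff₀ hlam₂).mp ((Real.lt_sqrt hε.le).mp hsmall)
    rw [sub_pos, lt_div_iff₀ hε]
    linarith
  have hM : ‖ξ τ₁‖ ≤ sSup ((fun τ => ‖ξ τ‖) '' Icc t' (t' + ε)) :=
    (hcont.isGreatest_sSup_norm_image_Icc (by linarith)).2 (mem_image_of_mem _ hτ₁)
  exact mul_pos hcoef (pow_pos ((norm_pos_iff.mpr hξτ₁).trans_le hM) 2)

/-- for a piecewise-C¹ based loop,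
`∫ (λ₁|ξ'|² − λ₂|ξ|²) ≥ (λ₁/ε − ελ₂) sup|ξ|²`; strict positivity for small `ε`. -/
theorem stmt_7 {d : ℕ} (t' ε lam₁ lam₂ : ℝ) (hε : 0 < ε)
    (hlam₁ : 0 < lam₁) (hlam₂ : 0 < lam₂)
    (ξ ξ' : ℝ → EuclideanSpace ℝ (Fin d))
    (hpc : PiecewiseC1On ξ ξ' t' (t' + ε))
    (h0 : ξ t' = 0) (h1 : ξ (t' + ε) = 0) :
    (lam₁ / ε - ε * lam₂) * (sSup ((fun τ => ‖ξ τ‖) '' Set.Icc t' (t' + ε))) ^ 2 ≤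
      (∫ τ in t'..t' + ε, (lam₁ * ‖ξ' τ‖ ^ 2 - lam₂ * ‖ξ τ‖ ^ 2)) ∧
    (ε < Real.sqrt (lam₁ / lam₂) → (∃ τ ∈ Set.Icc t' (t' + ε), ξ τ ≠ 0) →
      0 < ∫ τ in t'..t' + ε, (lam₁ * ‖ξ' τ‖ ^ 2 - lam₂ * ‖ξ τ‖ ^ 2)) :=
  stmt_7_general t' ε lam₁ lam₂ hε hlam₁ hlam₂ ξ ξ' hpc h0
end

section
/- Let S₀(q₀,q) and S₁(q,q₁) be smooth functions on open sets, and suppose q_cp(q₀,q₁) is a smooth function satisfying the criticality condition ∂/∂q [S₀(q₀,q) + S₁(q,q₁)] = 0 at q = q_cp(q₀,q₁), with the Hessian H(q₀,q₁) = ∂²[S₀+S₁]/∂q² |_{q=q_cp} invertible. Define S(q₀,q₁) = S₀(q₀,q_cp(q₀,q₁)) + S₁(q_cp(q₀,q₁),q₁). Then: ∂²(−S)/∂q₀^i ∂q₁^j = (∂²(−S₀)/∂q₀^i ∂q^l) · (∂²(−S₁)/∂q^k ∂q₁^j) · (H⁻¹)^{kl}, evaluated at q = q_cp(q₀,q₁).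 -/
open ContinuousLinearMap Matrix

noncomputable section
namespace Stmt16

variable {E F G : Type*} [NormedAddCommGroup E] [NormedSpace ℝ E]
  [NormedAddCommGroup F] [NormedSpace ℝ F] [NormedAddCommGroup G] [NormedSpace ℝ G]

lemma fderiv_partial_right {Φ : E × F → G} (hΦ : ContDiff ℝ (⊤ : ℕ∞) Φ) (x : E) (y : F) :
    fderiv ℝ (fun b => Φ (x, b)) y = (fderiv ℝ Φ (x, y)).comp (inr ℝ E F) := by
  have h1 : HasFDerivAt Φ (fderiv ℝ Φ (x, y)) (x, y) :=
    (hΦ.differentiable (by simp) (x, y)).hasFDerivAt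
  exact (h1.comp y (hasFDerivAt_prodMk_right x y)).fderiv

lemma fderiv_partial_left {Φ : E × F → G} (hΦ : ContDiff ℝ (⊤ : ℕ∞) Φ) (x : E) (y : F) :
    fderiv ℝ (fun a => Φ (a, y)) x = (fderiv ℝ Φ (x, y)).comp (inl ℝ E F) := by
  have h1 : HasFDerivAt Φ (fderiv ℝ Φ (x, y)) (x, y) :=
    (hΦ.differentiable (by simp) (x, y)).hasFDerivAt
  exact (h1.comp x (hasFDerivAt_prodMk_left x y)).fderiv

lemma hasFDerivAt_partial_right {Φ : E × F → G} (hΦ : ContDiff ℝ (⊤ : ℕ∞) Φ) (x : E) (y : F) :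
    HasFDerivAt (fun b => Φ (x, b)) ((fderiv ℝ Φ (x, y)).comp (inr ℝ E F)) y :=
  ((hΦ.differentiable (by simp) (x, y)).hasFDerivAt).comp y (hasFDerivAt_prodMk_right x y)

lemma hasFDerivAt_partial_left {Φ : E × F → G} (hΦ : ContDiff ℝ (⊤ : ℕ∞) Φ) (x : E) (y : F) :
    HasFDerivAt (fun a => Φ (a, y)) ((fderiv ℝ Φ (x, y)).comp (inl ℝ E F)) x :=
  ((hΦ.differentiable (by simp) (x, y)).hasFDerivAt).comp x (hasFDerivAt_prodMk_left x y)

lemma contDiff_fderiv_apply {f : E → G} (hf : ContDiff ℝ (⊤ : ℕ∞) f) (v : E) :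
    ContDiff ℝ (⊤ : ℕ∞) (fun x => fderiv ℝ f x v) :=
  (ContinuousLinearMap.apply ℝ G v).contDiff.comp (hf.fderiv_right (by simp))

lemma fderiv_fderiv_apply {f : E → G} (hf : ContDiff ℝ (⊤ : ℕ∞) f) (x : E) (v w : E) :
    fderiv ℝ (fun y => fderiv ℝ f y v) x w = fderiv ℝ (fderiv ℝ f) x w v := by
  have h1 : HasFDerivAt (fderiv ℝ f) (fderiv ℝ (fderiv ℝ f) x) x :=
    ((hf.fderiv_right (m := (⊤ : ℕ∞)) (by simp)).differentiable (by simp) x).hasFDerivAt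
  have h2 : HasFDerivAt (fun y => fderiv ℝ f y v)
      ((ContinuousLinearMap.apply ℝ G v).comp (fderiv ℝ (fderiv ℝ f) x)) x :=
    (ContinuousLinearMap.apply ℝ G v).hasFDerivAt.comp x h1
  rw [h2.fderiv]; rfl

lemma second_deriv_symm {f : E → G} (hf : ContDiff ℝ (⊤ : ℕ∞) f) (x : E) (v w : E) :
    fderiv ℝ (fun y => fderiv ℝ f y v) x w = fderiv ℝ (fun y => fderiv ℝ f y w) x v := by
  rw [fderiv_fderiv_apply hf x v w, fderiv_fderiv_apply hf x w v]
  have h1 : HasFDerivAt (fderiv ℝ f) (fderiv ℝ (fderiv ℝ f) x) x :=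
    ((hf.fderiv_right (m := (⊤ : ℕ∞)) (by simp)).differentiable (by simp) x).hasFDerivAt
  exact second_derivative_symmetric_of_eventually
    (Filter.Eventually.of_forall fun y => (hf.differentiable (by simp) y).hasFDerivAt) h1 w v

lemma clm_pi_decomp {d : ℕ} (L : (Fin d → ℝ) →L[ℝ] ℝ) (u : Fin d → ℝ) :
    L u = ∑ k, u k * L (Pi.single k 1) := by
  conv_lhs => rw [← Finset.univ_sum_single u]
  rw [map_sum]
  refine Finset.sum_congr rfl fun k _ => ?_
  have h : (Pi.single k (u k) : Fin d → ℝ) = u k • (Pi.single k (1 : ℝ) : Fin d → ℝ) := by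
    have := Pi.single_smul (f := fun _ : Fin d => ℝ) k (u k) (1 : ℝ)
    simpa using this
  rw [h, _root_.map_smul, smul_eq_mul]


variable {d : ℕ}

lemma inner_reduction
    (S₀ S₁ : (Fin d → ℝ) → (Fin d → ℝ) → ℝ)
    (qcp : (Fin d → ℝ) → (Fin d → ℝ) → (Fin d → ℝ))
    (hS₀ : ContDiff ℝ (⊤ : ℕ∞) (fun p : (Fin d → ℝ) × (Fin d → ℝ) => S₀ p.1 p.2))
    (hS₁ : ContDiff ℝ (⊤ : ℕ∞) (fun p : (Fin d → ℝ) × (Fin d → ℝ) => S₁ p.1 p.2))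
    (hqcp : ContDiff ℝ (⊤ : ℕ∞) (fun p : (Fin d → ℝ) × (Fin d → ℝ) => qcp p.1 p.2))
    (hcrit : ∀ q₀ q₁, fderiv ℝ (fun q => S₀ q₀ q + S₁ q q₁) (qcp q₀ q₁) = 0)
    (a q₁ : Fin d → ℝ) (j : Fin d) :
    fderiv ℝ (fun b => -(S₀ a (qcp a b) + S₁ (qcp a b) b)) q₁ (Pi.single j 1)
      = -(fderiv ℝ (fun p : (Fin d → ℝ) × (Fin d → ℝ) => S₁ p.1 p.2)
          (qcp a q₁, q₁) (0, Pi.single j 1)) := by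
  have hc : ContDiff ℝ (⊤ : ℕ∞) (fun b => qcp a b) :=
    hqcp.comp (contDiff_const.prodMk contDiff_id)
  set F : (Fin d → ℝ) × (Fin d → ℝ) → ℝ := fun p => S₀ a p.1 + S₁ p.1 p.2 with hFdef
  have hF : ContDiff ℝ (⊤ : ℕ∞) F :=
    (hS₀.comp (contDiff_const.prodMk contDiff_fst)).add
      (hS₁.comp (contDiff_fst.prodMk contDiff_snd))
  have hcd : HasFDerivAt (fun b => qcp a b) (fderiv ℝ (fun b => qcp a b) q₁) q₁ :=
    (hc.differentiable (by simp) q₁).hasFDerivAt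
  have hpair : HasFDerivAt (fun b => (qcp a b, b))
      ((fderiv ℝ (fun b => qcp a b) q₁).prod (ContinuousLinearMap.id ℝ _)) q₁ :=
    hcd.prodMk (hasFDerivAt_id q₁)
  have hFd : HasFDerivAt F (fderiv ℝ F (qcp a q₁, q₁)) (qcp a q₁, q₁) :=
    (hF.differentiable (by simp) _).hasFDerivAt
  have hcomp' : HasFDerivAt (F ∘ fun b => (qcp a b, b))
      ((fderiv ℝ F (qcp a q₁, q₁)).comp
        ((fderiv ℝ (fun b => qcp a b) q₁).prod (ContinuousLinearMap.id ℝ _))) q₁ :=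
    HasFDerivAt.comp (f := fun b => (qcp a b, b)) q₁ hFd hpair
  have hcomp : HasFDerivAt (fun b => S₀ a (qcp a b) + S₁ (qcp a b) b)
      ((fderiv ℝ F (qcp a q₁, q₁)).comp
        ((fderiv ℝ (fun b => qcp a b) q₁).prod (ContinuousLinearMap.id ℝ _))) q₁ := hcomp'
  rw [fderiv_fun_neg, ContinuousLinearMap.neg_apply, hcomp.fderiv]
  rw [neg_inj]
  have happ : ((fderiv ℝ F (qcp a q₁, q₁)).comp
      ((fderiv ℝ (fun b => qcp a b) q₁).prod (ContinuousLinearMap.id ℝ _))) (Pi.single j 1)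
      = fderiv ℝ F (qcp a q₁, q₁) (fderiv ℝ (fun b => qcp a b) q₁ (Pi.single j 1), Pi.single j 1) := rfl
  rw [happ]
  have split : fderiv ℝ F (qcp a q₁, q₁)
        (fderiv ℝ (fun b => qcp a b) q₁ (Pi.single j 1), Pi.single j 1)
      = fderiv ℝ F (qcp a q₁, q₁) (fderiv ℝ (fun b => qcp a b) q₁ (Pi.single j 1), 0)
        + fderiv ℝ F (qcp a q₁, q₁) ((0 : Fin d → ℝ), Pi.single j 1) := by
    rw [← ContinuousLinearMap.map_add]
    congr 1
    simp
  rw [split]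
  have hleft : fderiv ℝ F (qcp a q₁, q₁)
      (fderiv ℝ (fun b => qcp a b) q₁ (Pi.single j 1), 0) = 0 := by
    have h1 := fderiv_partial_left hF (qcp a q₁) q₁
    have h2 : (fun x => F (x, q₁)) = fun q => S₀ a q + S₁ q q₁ := rfl
    have h4 : (fderiv ℝ F (qcp a q₁, q₁)).comp
        (ContinuousLinearMap.inl ℝ (Fin d → ℝ) (Fin d → ℝ)) = 0 := by
      rw [← h1, h2, hcrit a q₁]
    calc fderiv ℝ F (qcp a q₁, q₁) (fderiv ℝ (fun b => qcp a b) q₁ (Pi.single j 1), 0)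
        = ((fderiv ℝ F (qcp a q₁, q₁)).comp
            (ContinuousLinearMap.inl ℝ (Fin d → ℝ) (Fin d → ℝ)))
            (fderiv ℝ (fun b => qcp a b) q₁ (Pi.single j 1)) := rfl
      _ = 0 := by rw [h4]; rfl
  rw [hleft, zero_add]
  -- remaining: fderiv F (0, e j) = fderiv G₁ (0, e j)
  have h5 := fderiv_partial_right hF (qcp a q₁) q₁
  have h6 := fderiv_partial_right hS₁ (qcp a q₁) q₁
  have h7 : (fun b => F (qcp a q₁, b)) = fun b => S₀ a (qcp a q₁) + S₁ (qcp a q₁) b := rfl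
  have h8 : fderiv ℝ (fun b => S₀ a (qcp a q₁) + S₁ (qcp a q₁) b) q₁
      = fderiv ℝ (fun b => S₁ (qcp a q₁) b) q₁ := by
    exact fderiv_const_add _
  have h9 : (fun b => (fun p : (Fin d → ℝ) × (Fin d → ℝ) => S₁ p.1 p.2) (qcp a q₁, b))
      = fun b => S₁ (qcp a q₁) b := rfl
  calc fderiv ℝ F (qcp a q₁, q₁) ((0 : Fin d → ℝ), Pi.single j 1)
      = ((fderiv ℝ F (qcp a q₁, q₁)).comp
          (ContinuousLinearMap.inr ℝ (Fin d → ℝ) (Fin d → ℝ))) (Pi.single j 1) := rfl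
    _ = fderiv ℝ (fun b => S₁ (qcp a q₁) b) q₁ (Pi.single j 1) := by
          rw [← h5, h7, h8]
    _ = fderiv ℝ (fun p : (Fin d → ℝ) × (Fin d → ℝ) => S₁ p.1 p.2)
          (qcp a q₁, q₁) (0, Pi.single j 1) := by
          rw [← h9, h6]; rfl


lemma critical_row
    (S₀ S₁ : (Fin d → ℝ) → (Fin d → ℝ) → ℝ)
    (qcp : (Fin d → ℝ) → (Fin d → ℝ) → (Fin d → ℝ))
    (hS₀ : ContDiff ℝ (⊤ : ℕ∞) (fun p : (Fin d → ℝ) × (Fin d → ℝ) => S₀ p.1 p.2))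
    (hS₁ : ContDiff ℝ (⊤ : ℕ∞) (fun p : (Fin d → ℝ) × (Fin d → ℝ) => S₁ p.1 p.2))
    (hqcp : ContDiff ℝ (⊤ : ℕ∞) (fun p : (Fin d → ℝ) × (Fin d → ℝ) => qcp p.1 p.2))
    (hcrit : ∀ q₀ q₁, fderiv ℝ (fun q => S₀ q₀ q + S₁ q q₁) (qcp q₀ q₁) = 0)
    (q₀ q₁ : Fin d → ℝ) (i l : Fin d) :
    fderiv ℝ (fun a => fderiv ℝ (fun q => S₀ a q) (qcp q₀ q₁) (Pi.single l 1)) q₀ (Pi.single i 1)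
    + ∑ k, (fderiv ℝ (fun a => qcp a q₁) q₀ (Pi.single i 1)) k *
        (fderiv ℝ (fun q => fderiv ℝ (fun q' => S₀ q₀ q' + S₁ q' q₁) q (Pi.single l 1))
          (qcp q₀ q₁) (Pi.single k 1)) = 0 := by
  have hQ1 : ContDiff ℝ (⊤ : ℕ∞) (fun a => qcp a q₁) := hqcp.comp (contDiff_id.prodMk contDiff_const)
  have hf₁ : ContDiff ℝ (⊤ : ℕ∞) (fun q => S₁ q q₁) := hS₁.comp (contDiff_id.prodMk contDiff_const)
  have hf₀ : ∀ a : Fin d → ℝ, ContDiff ℝ (⊤ : ℕ∞) (fun q => S₀ a q) :=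
    fun a => hS₀.comp (contDiff_const.prodMk contDiff_id)
  set K : (Fin d → ℝ) × (Fin d → ℝ) → ℝ := fun p =>
      fderiv ℝ (fun p' : (Fin d → ℝ) × (Fin d → ℝ) => S₀ p'.1 p'.2) p
        ((0 : Fin d → ℝ), Pi.single l 1)
      + fderiv ℝ (fun q => S₁ q q₁) p.2 (Pi.single l 1) with hKdef
  have hKc : ContDiff ℝ (⊤ : ℕ∞) K :=
    (contDiff_fderiv_apply hS₀ _).add
      ((contDiff_fderiv_apply hf₁ (Pi.single l 1)).comp contDiff_snd)
  have hKval : ∀ (a q : Fin d → ℝ), K (a, q)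
      = fderiv ℝ (fun q' => S₀ a q' + S₁ q' q₁) q (Pi.single l 1) := by
    intro a q
    have e0 : fderiv ℝ (fun q' => S₀ a q') q
        = (fderiv ℝ (fun p' : (Fin d → ℝ) × (Fin d → ℝ) => S₀ p'.1 p'.2) (a, q)).comp
            (ContinuousLinearMap.inr ℝ (Fin d → ℝ) (Fin d → ℝ)) :=
      HasFDerivAt.fderiv (by exact hasFDerivAt_partial_right hS₀ a q)
    have e1 : fderiv ℝ (fun q' => S₀ a q' + S₁ q' q₁) q
        = fderiv ℝ (fun q' => S₀ a q') q + fderiv ℝ (fun q' => S₁ q' q₁) q :=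
      fderiv_add ((hf₀ a).differentiable (by simp) q) (hf₁.differentiable (by simp) q)
    rw [e1, ContinuousLinearMap.add_apply, e0]
    rfl
  have hψ : (fun a => K (a, qcp a q₁)) = fun _ => (0 : ℝ) := by
    funext a
    rw [hKval a (qcp a q₁), hcrit a q₁]
    rfl
  have hQd : HasFDerivAt (fun a => qcp a q₁) (fderiv ℝ (fun a => qcp a q₁) q₀) q₀ :=
    (hQ1.differentiable (by simp) q₀).hasFDerivAt
  have hpair : HasFDerivAt (fun a => (a, qcp a q₁))
      ((ContinuousLinearMap.id ℝ (Fin d → ℝ)).prod (fderiv ℝ (fun a => qcp a q₁) q₀)) q₀ :=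
    (hasFDerivAt_id q₀).prodMk hQd
  have hKd : HasFDerivAt K (fderiv ℝ K (q₀, qcp q₀ q₁)) (q₀, qcp q₀ q₁) :=
    (hKc.differentiable (by simp) _).hasFDerivAt
  have hch : HasFDerivAt (fun a => K (a, qcp a q₁))
      ((fderiv ℝ K (q₀, qcp q₀ q₁)).comp
        ((ContinuousLinearMap.id ℝ (Fin d → ℝ)).prod (fderiv ℝ (fun a => qcp a q₁) q₀))) q₀ :=
    HasFDerivAt.comp (f := fun a => (a, qcp a q₁)) q₀ hKd hpair
  have hzero : fderiv ℝ (fun a => K (a, qcp a q₁)) q₀ (Pi.single i 1) = 0 := by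
    rw [hψ]
    simp
  rw [hch.fderiv] at hzero
  have happ : ((fderiv ℝ K (q₀, qcp q₀ q₁)).comp
      ((ContinuousLinearMap.id ℝ (Fin d → ℝ)).prod (fderiv ℝ (fun a => qcp a q₁) q₀)))
        (Pi.single i 1)
      = fderiv ℝ K (q₀, qcp q₀ q₁)
          (Pi.single i 1, fderiv ℝ (fun a => qcp a q₁) q₀ (Pi.single i 1)) := rfl
  rw [happ] at hzero
  have split : fderiv ℝ K (q₀, qcp q₀ q₁)
        (Pi.single i 1, fderiv ℝ (fun a => qcp a q₁) q₀ (Pi.single i 1))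
      = fderiv ℝ K (q₀, qcp q₀ q₁) (Pi.single i 1, 0)
        + fderiv ℝ K (q₀, qcp q₀ q₁)
            ((0 : Fin d → ℝ), fderiv ℝ (fun a => qcp a q₁) q₀ (Pi.single i 1)) := by
    rw [← ContinuousLinearMap.map_add]
    congr 1
    simp
  rw [split] at hzero
  have hA : fderiv ℝ K (q₀, qcp q₀ q₁) (Pi.single i 1, 0)
      = fderiv ℝ (fun a => fderiv ℝ (fun q => S₀ a q) (qcp q₀ q₁) (Pi.single l 1)) q₀
          (Pi.single i 1) := by
    have e2 : fderiv ℝ (fun a => K (a, qcp q₀ q₁)) q₀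
        = (fderiv ℝ K (q₀, qcp q₀ q₁)).comp
            (ContinuousLinearMap.inl ℝ (Fin d → ℝ) (Fin d → ℝ)) :=
      HasFDerivAt.fderiv (by exact hasFDerivAt_partial_left hKc q₀ (qcp q₀ q₁))
    have e3 : (fun a => K (a, qcp q₀ q₁))
        = fun a => fderiv ℝ (fun p' : (Fin d → ℝ) × (Fin d → ℝ) => S₀ p'.1 p'.2)
              (a, qcp q₀ q₁) ((0 : Fin d → ℝ), Pi.single l 1)
            + fderiv ℝ (fun q => S₁ q q₁) (qcp q₀ q₁) (Pi.single l 1) := rfl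
    have e4 : fderiv ℝ (fun a => K (a, qcp q₀ q₁)) q₀
        = fderiv ℝ (fun a => fderiv ℝ (fun p' : (Fin d → ℝ) × (Fin d → ℝ) => S₀ p'.1 p'.2)
            (a, qcp q₀ q₁) ((0 : Fin d → ℝ), Pi.single l 1)) q₀ := by
      rw [e3]
      exact fderiv_add_const _
    have e5 : (fun a => fderiv ℝ (fun q => S₀ a q) (qcp q₀ q₁) (Pi.single l 1))
        = fun a => fderiv ℝ (fun p' : (Fin d → ℝ) × (Fin d → ℝ) => S₀ p'.1 p'.2)
            (a, qcp q₀ q₁) ((0 : Fin d → ℝ), Pi.single l 1) := by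
      funext a
      have e6 : fderiv ℝ (fun q => S₀ a q) (qcp q₀ q₁)
          = (fderiv ℝ (fun p' : (Fin d → ℝ) × (Fin d → ℝ) => S₀ p'.1 p'.2) (a, qcp q₀ q₁)).comp
              (ContinuousLinearMap.inr ℝ (Fin d → ℝ) (Fin d → ℝ)) :=
        HasFDerivAt.fderiv (by exact hasFDerivAt_partial_right hS₀ a (qcp q₀ q₁))
      rw [e6]
      rfl
    calc fderiv ℝ K (q₀, qcp q₀ q₁) (Pi.single i 1, 0)
        = ((fderiv ℝ K (q₀, qcp q₀ q₁)).comp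
            (ContinuousLinearMap.inl ℝ (Fin d → ℝ) (Fin d → ℝ))) (Pi.single i 1) := rfl
      _ = fderiv ℝ (fun a => K (a, qcp q₀ q₁)) q₀ (Pi.single i 1) := by rw [e2]
      _ = _ := by rw [e4, ← e5]
  have hB : fderiv ℝ K (q₀, qcp q₀ q₁)
        ((0 : Fin d → ℝ), fderiv ℝ (fun a => qcp a q₁) q₀ (Pi.single i 1))
      = ∑ k, (fderiv ℝ (fun a => qcp a q₁) q₀ (Pi.single i 1)) k *
          (fderiv ℝ (fun q => fderiv ℝ (fun q' => S₀ q₀ q' + S₁ q' q₁) q (Pi.single l 1))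
            (qcp q₀ q₁) (Pi.single k 1)) := by
    have e7 : fderiv ℝ (fun q => K (q₀, q)) (qcp q₀ q₁)
        = (fderiv ℝ K (q₀, qcp q₀ q₁)).comp
            (ContinuousLinearMap.inr ℝ (Fin d → ℝ) (Fin d → ℝ)) :=
      HasFDerivAt.fderiv (by exact hasFDerivAt_partial_right hKc q₀ (qcp q₀ q₁))
    have e8 : (fun q => K (q₀, q))
        = fun q => fderiv ℝ (fun q' => S₀ q₀ q' + S₁ q' q₁) q (Pi.single l 1) := by
      funext q
      exact hKval q₀ q
    calc fderiv ℝ K (q₀, qcp q₀ q₁)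
          ((0 : Fin d → ℝ), fderiv ℝ (fun a => qcp a q₁) q₀ (Pi.single i 1))
        = fderiv ℝ (fun q => K (q₀, q)) (qcp q₀ q₁)
            (fderiv ℝ (fun a => qcp a q₁) q₀ (Pi.single i 1)) := by rw [e7]; rfl
      _ = fderiv ℝ (fun q => fderiv ℝ (fun q' => S₀ q₀ q' + S₁ q' q₁) q (Pi.single l 1))
            (qcp q₀ q₁) (fderiv ℝ (fun a => qcp a q₁) q₀ (Pi.single i 1)) := by rw [e8]
      _ = _ := clm_pi_decomp _ _
  rw [hA, hB] at hzero
  exact hzero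


lemma outer_reduction
    (S₀ S₁ : (Fin d → ℝ) → (Fin d → ℝ) → ℝ)
    (qcp : (Fin d → ℝ) → (Fin d → ℝ) → (Fin d → ℝ))
    (hS₀ : ContDiff ℝ (⊤ : ℕ∞) (fun p : (Fin d → ℝ) × (Fin d → ℝ) => S₀ p.1 p.2))
    (hS₁ : ContDiff ℝ (⊤ : ℕ∞) (fun p : (Fin d → ℝ) × (Fin d → ℝ) => S₁ p.1 p.2))
    (hqcp : ContDiff ℝ (⊤ : ℕ∞) (fun p : (Fin d → ℝ) × (Fin d → ℝ) => qcp p.1 p.2))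
    (hcrit : ∀ q₀ q₁, fderiv ℝ (fun q => S₀ q₀ q + S₁ q q₁) (qcp q₀ q₁) = 0)
    (q₀ q₁ : Fin d → ℝ) (i j : Fin d) :
    fderiv ℝ (fun a =>
        fderiv ℝ (fun b => -(S₀ a (qcp a b) + S₁ (qcp a b) b)) q₁ (Pi.single j 1))
      q₀ (Pi.single i 1)
    = -(∑ k, (fderiv ℝ (fun a => qcp a q₁) q₀ (Pi.single i 1)) k *
        (fderiv ℝ (fun q => fderiv ℝ (fun p : (Fin d → ℝ) × (Fin d → ℝ) => S₁ p.1 p.2) (q, q₁)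
          ((0 : Fin d → ℝ), Pi.single j 1)) (qcp q₀ q₁) (Pi.single k 1))) := by
  have hQ1 : ContDiff ℝ (⊤ : ℕ∞) (fun a => qcp a q₁) := hqcp.comp (contDiff_id.prodMk contDiff_const)
  have hfun : (fun a =>
        fderiv ℝ (fun b => -(S₀ a (qcp a b) + S₁ (qcp a b) b)) q₁ (Pi.single j 1))
      = fun a => -(fderiv ℝ (fun p : (Fin d → ℝ) × (Fin d → ℝ) => S₁ p.1 p.2) (qcp a q₁, q₁)
          ((0 : Fin d → ℝ), Pi.single j 1)) :=
    funext fun a => inner_reduction S₀ S₁ qcp hS₀ hS₁ hqcp hcrit a q₁ j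
  rw [hfun, fderiv_fun_neg, ContinuousLinearMap.neg_apply, neg_inj]
  have hΦc : ContDiff ℝ (⊤ : ℕ∞) (fun q : Fin d → ℝ =>
      fderiv ℝ (fun p : (Fin d → ℝ) × (Fin d → ℝ) => S₁ p.1 p.2) (q, q₁)
        ((0 : Fin d → ℝ), Pi.single j 1)) :=
    (contDiff_fderiv_apply hS₁ _).comp (contDiff_id.prodMk contDiff_const)
  have hΦd : HasFDerivAt (fun q : Fin d → ℝ =>
      fderiv ℝ (fun p : (Fin d → ℝ) × (Fin d → ℝ) => S₁ p.1 p.2) (q, q₁)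
        ((0 : Fin d → ℝ), Pi.single j 1))
      (fderiv ℝ (fun q : Fin d → ℝ =>
        fderiv ℝ (fun p : (Fin d → ℝ) × (Fin d → ℝ) => S₁ p.1 p.2) (q, q₁)
          ((0 : Fin d → ℝ), Pi.single j 1)) (qcp q₀ q₁)) (qcp q₀ q₁) :=
    (hΦc.differentiable (by simp) _).hasFDerivAt
  have hQd : HasFDerivAt (fun a => qcp a q₁) (fderiv ℝ (fun a => qcp a q₁) q₀) q₀ :=
    (hQ1.differentiable (by simp) q₀).hasFDerivAt
  have hch : HasFDerivAt (fun a =>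
      fderiv ℝ (fun p : (Fin d → ℝ) × (Fin d → ℝ) => S₁ p.1 p.2) (qcp a q₁, q₁)
        ((0 : Fin d → ℝ), Pi.single j 1))
      ((fderiv ℝ (fun q : Fin d → ℝ =>
        fderiv ℝ (fun p : (Fin d → ℝ) × (Fin d → ℝ) => S₁ p.1 p.2) (q, q₁)
          ((0 : Fin d → ℝ), Pi.single j 1)) (qcp q₀ q₁)).comp
        (fderiv ℝ (fun a => qcp a q₁) q₀)) q₀ :=
    HasFDerivAt.comp (f := fun a => qcp a q₁) q₀ hΦd hQd
  rw [hch.fderiv]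
  have happ : ((fderiv ℝ (fun q : Fin d → ℝ =>
      fderiv ℝ (fun p : (Fin d → ℝ) × (Fin d → ℝ) => S₁ p.1 p.2) (q, q₁)
        ((0 : Fin d → ℝ), Pi.single j 1)) (qcp q₀ q₁)).comp
        (fderiv ℝ (fun a => qcp a q₁) q₀)) (Pi.single i 1)
      = fderiv ℝ (fun q : Fin d → ℝ =>
        fderiv ℝ (fun p : (Fin d → ℝ) × (Fin d → ℝ) => S₁ p.1 p.2) (q, q₁)
          ((0 : Fin d → ℝ), Pi.single j 1)) (qcp q₀ q₁)
        (fderiv ℝ (fun a => qcp a q₁) q₀ (Pi.single i 1)) := rfl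
  rw [happ]
  exact clm_pi_decomp _ _

lemma B_factor
    (S₁ : (Fin d → ℝ) → (Fin d → ℝ) → ℝ)
    (hS₁ : ContDiff ℝ (⊤ : ℕ∞) (fun p : (Fin d → ℝ) × (Fin d → ℝ) => S₁ p.1 p.2))
    (q₁ x : Fin d → ℝ) (j k : Fin d) :
    fderiv ℝ (fun q => fderiv ℝ (fun b => -(S₁ q b)) q₁ (Pi.single j 1)) x (Pi.single k 1)
    = -(fderiv ℝ (fun q => fderiv ℝ (fun p : (Fin d → ℝ) × (Fin d → ℝ) => S₁ p.1 p.2) (q, q₁)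
        ((0 : Fin d → ℝ), Pi.single j 1)) x (Pi.single k 1)) := by
  have e1 : (fun q => fderiv ℝ (fun b => -(S₁ q b)) q₁ (Pi.single j 1))
      = fun q => -(fderiv ℝ (fun p : (Fin d → ℝ) × (Fin d → ℝ) => S₁ p.1 p.2) (q, q₁)
          ((0 : Fin d → ℝ), Pi.single j 1)) := by
    funext q
    have e2 : fderiv ℝ (fun b => S₁ q b) q₁
        = (fderiv ℝ (fun p : (Fin d → ℝ) × (Fin d → ℝ) => S₁ p.1 p.2) (q, q₁)).comp
            (ContinuousLinearMap.inr ℝ (Fin d → ℝ) (Fin d → ℝ)) :=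
      HasFDerivAt.fderiv (by exact hasFDerivAt_partial_right hS₁ q q₁)
    rw [fderiv_fun_neg, ContinuousLinearMap.neg_apply, e2]
    rfl
  rw [e1, fderiv_fun_neg, ContinuousLinearMap.neg_apply]

lemma A_factor
    (S₀ : (Fin d → ℝ) → (Fin d → ℝ) → ℝ)
    (x q₀ : Fin d → ℝ) (l i : Fin d) :
    fderiv ℝ (fun a => fderiv ℝ (fun q => -(S₀ a q)) x (Pi.single l 1)) q₀ (Pi.single i 1)
    = -(fderiv ℝ (fun a => fderiv ℝ (fun q => S₀ a q) x (Pi.single l 1)) q₀ (Pi.single i 1)) := by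
  have e1 : (fun a => fderiv ℝ (fun q => -(S₀ a q)) x (Pi.single l 1))
      = fun a => -(fderiv ℝ (fun q => S₀ a q) x (Pi.single l 1)) := by
    funext a
    rw [fderiv_fun_neg, ContinuousLinearMap.neg_apply]
  rw [e1, fderiv_fun_neg, ContinuousLinearMap.neg_apply]

lemma hessian_symm {g : (Fin d → ℝ) → ℝ} (hg : ContDiff ℝ (⊤ : ℕ∞) g) (x : Fin d → ℝ) :
    (Matrix.of fun k l : Fin d =>
      fderiv ℝ (fun q => fderiv ℝ g q (Pi.single l 1)) x (Pi.single k 1))ᵀ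
    = Matrix.of fun k l : Fin d =>
      fderiv ℝ (fun q => fderiv ℝ g q (Pi.single l 1)) x (Pi.single k 1) := by
  ext k l
  simp only [Matrix.transpose_apply, Matrix.of_apply]
  exact second_deriv_symm hg x (Pi.single k 1) (Pi.single l 1)

lemma final_algebra (u A B : Fin d → ℝ) (M : Matrix (Fin d) (Fin d) ℝ)
    (hM : IsUnit M) (hMsym : Mᵀ = M)
    (hrow : ∀ l, A l + ∑ k, u k * M k l = 0) :
    -(∑ k, u k * B k) = ∑ k, ∑ l, (-(A l)) * (-(B k)) * M⁻¹ k l := by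
  have hdet : IsUnit M.det := (Matrix.isUnit_iff_isUnit_det M).mp hM
  have hMM : M * M⁻¹ = 1 := Matrix.mul_nonsing_inv M hdet
  have hvm : Matrix.vecMul u M = fun l => -(A l) := by
    funext l
    have h1 := hrow l
    have h2 : Matrix.vecMul u M l = ∑ k, u k * M k l := by
      simp [Matrix.vecMul, dotProduct]
    rw [h2]
    linarith
  have hu : u = Matrix.vecMul (fun l => -(A l)) M⁻¹ := by
    calc u = Matrix.vecMul u 1 := by rw [Matrix.vecMul_one]
      _ = Matrix.vecMul u (M * M⁻¹) := by rw [hMM]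
      _ = Matrix.vecMul (Matrix.vecMul u M) M⁻¹ := (Matrix.vecMul_vecMul u M M⁻¹).symm
      _ = Matrix.vecMul (fun l => -(A l)) M⁻¹ := by rw [hvm]
  have huk : ∀ k, u k = ∑ l, -(A l) * M⁻¹ l k := by
    intro k
    conv_lhs => rw [hu]
    simp [Matrix.vecMul, dotProduct]
  have hinv : ∀ k l, M⁻¹ l k = M⁻¹ k l := by
    intro k l
    have h3 : M⁻¹ᵀ = M⁻¹ := by rw [Matrix.transpose_nonsing_inv, hMsym]
    calc M⁻¹ l k = M⁻¹ᵀ k l := rfl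
      _ = M⁻¹ k l := by rw [h3]
  calc -(∑ k, u k * B k)
      = ∑ k, ∑ l, A l * M⁻¹ l k * B k := by
        rw [neg_eq_iff_eq_neg, ← Finset.sum_neg_distrib]
        refine Finset.sum_congr rfl fun k _ => ?_
        rw [huk k, Finset.sum_mul, ← Finset.sum_neg_distrib]
        refine Finset.sum_congr rfl fun l _ => ?_
        ring
    _ = ∑ k, ∑ l, (-(A l)) * (-(B k)) * M⁻¹ k l := by
        refine Finset.sum_congr rfl fun k _ => Finset.sum_congr rfl fun l _ => ?_
        rw [← hinv k l]
        ring

end Stmt16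

open Stmt16 in

/-- composition identity for Hamilton principal functions.  If
`q_cp(q₀,q₁)` is a critical point of `q ↦ S₀(q₀,q) + S₁(q,q₁)` with invertible
Hessian `H`, and `S(q₀,q₁) = S₀(q₀,q_cp) + S₁(q_cp,q₁)`, then
`∂²(−S)/∂q₀^i∂q₁^j = ∂²(−S₀)/∂q₀^i∂q^l · ∂²(−S₁)/∂q^k∂q₁^j · (H⁻¹)^{kl}` at `q = q_cp`. -/
theorem stmt_16 {d : ℕ}
    (S₀ S₁ : (Fin d → ℝ) → (Fin d → ℝ) → ℝ)
    (qcp : (Fin d → ℝ) → (Fin d → ℝ) → (Fin d → ℝ))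
    (hS₀ : ContDiff ℝ (⊤ : ℕ∞) (fun p : (Fin d → ℝ) × (Fin d → ℝ) => S₀ p.1 p.2))
    (hS₁ : ContDiff ℝ (⊤ : ℕ∞) (fun p : (Fin d → ℝ) × (Fin d → ℝ) => S₁ p.1 p.2))
    (hqcp : ContDiff ℝ (⊤ : ℕ∞) (fun p : (Fin d → ℝ) × (Fin d → ℝ) => qcp p.1 p.2))
    (hcrit : ∀ q₀ q₁,
      fderiv ℝ (fun q => S₀ q₀ q + S₁ q q₁) (qcp q₀ q₁) = 0)
    (hH : ∀ q₀ q₁, IsUnit (Matrix.of fun k l : Fin d =>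
      fderiv ℝ (fun q => fderiv ℝ (fun q' => S₀ q₀ q' + S₁ q' q₁) q (Pi.single l 1))
        (qcp q₀ q₁) (Pi.single k 1))) :
    ∀ (q₀ q₁ : Fin d → ℝ) (i j : Fin d),
      fderiv ℝ (fun a =>
          fderiv ℝ (fun b => -(S₀ a (qcp a b) + S₁ (qcp a b) b)) q₁ (Pi.single j 1))
        q₀ (Pi.single i 1) =
      ∑ k : Fin d, ∑ l : Fin d,
        (fderiv ℝ (fun a => fderiv ℝ (fun q => -(S₀ a q)) (qcp q₀ q₁) (Pi.single l 1))
            q₀ (Pi.single i 1)) *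
        (fderiv ℝ (fun q => fderiv ℝ (fun b => -(S₁ q b)) q₁ (Pi.single j 1))
            (qcp q₀ q₁) (Pi.single k 1)) *
        ((Matrix.of fun k' l' : Fin d =>
          fderiv ℝ (fun q => fderiv ℝ (fun q' => S₀ q₀ q' + S₁ q' q₁) q (Pi.single l' 1))
            (qcp q₀ q₁) (Pi.single k' 1))⁻¹ k l) := by
  intro q₀ q₁ i j
  have hg : ContDiff ℝ (⊤ : ℕ∞) (fun q => S₀ q₀ q + S₁ q q₁) :=
    (hS₀.comp (contDiff_const.prodMk contDiff_id)).add
      (hS₁.comp (contDiff_id.prodMk contDiff_const))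
  have hBf : ∀ k : Fin d,
      fderiv ℝ (fun q => fderiv ℝ (fun b => -(S₁ q b)) q₁ (Pi.single j 1)) (qcp q₀ q₁)
        (Pi.single k 1)
      = -(fderiv ℝ (fun q => fderiv ℝ (fun p : (Fin d → ℝ) × (Fin d → ℝ) => S₁ p.1 p.2) (q, q₁)
          ((0 : Fin d → ℝ), Pi.single j 1)) (qcp q₀ q₁) (Pi.single k 1)) :=
    fun k => B_factor S₁ hS₁ q₁ (qcp q₀ q₁) j k
  have hAf : ∀ l : Fin d,
      fderiv ℝ (fun a => fderiv ℝ (fun q => -(S₀ a q)) (qcp q₀ q₁) (Pi.single l 1)) q₀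
        (Pi.single i 1)
      = -(fderiv ℝ (fun a => fderiv ℝ (fun q => S₀ a q) (qcp q₀ q₁) (Pi.single l 1)) q₀
          (Pi.single i 1)) :=
    fun l => A_factor S₀ (qcp q₀ q₁) q₀ l i
  rw [outer_reduction S₀ S₁ qcp hS₀ hS₁ hqcp hcrit q₀ q₁ i j]
  simp only [hAf, hBf]
  exact final_algebra
    (fderiv ℝ (fun a => qcp a q₁) q₀ (Pi.single i 1))
    (fun l => fderiv ℝ (fun a => fderiv ℝ (fun q => S₀ a q) (qcp q₀ q₁) (Pi.single l 1)) q₀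
      (Pi.single i 1))
    (fun k => fderiv ℝ (fun q => fderiv ℝ (fun p : (Fin d → ℝ) × (Fin d → ℝ) => S₁ p.1 p.2)
      (q, q₁) ((0 : Fin d → ℝ), Pi.single j 1)) (qcp q₀ q₁) (Pi.single k 1))
    _ (hH q₀ q₁) (hessian_symm hg (qcp q₀ q₁))
    (fun l => by
      have h := critical_row S₀ S₁ qcp hS₀ hS₁ hqcp hcrit q₀ q₁ i l
      simpa [Matrix.of_apply] using h)
end
end

section
/- In the setting of the previous composition identity, with q_cp a nondegenerate critical point of q ↦ S₀(q₀,q) + S₁(q,q₁) and S(q₀,q₁) the composed function, one has |det ∂²(−S)/∂q₀∂q₁| = |det ∂²(−S₀)/∂q₀∂q| · |det ∂²(−S₁)/∂q∂q₁| · |det ∂²[S₀+S₁]/∂q²|⁻¹, all evaluated at q = q_cp(q₀,q₁). In particular, if ∂²S₀/∂q₀∂q and ∂²S₁/∂q∂q₁ are invertible, then so is ∂²S/∂q₀∂q₁. -/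
open ContinuousLinearMap

section Helpers

variable {E F G : Type*} [NormedAddCommGroup E] [NormedSpace ℝ E]
  [NormedAddCommGroup F] [NormedSpace ℝ F] [NormedAddCommGroup G] [NormedSpace ℝ G]

private lemma my_partial_fst {Φ : E × F → G} {a : E} {b : F}
    (h : DifferentiableAt ℝ Φ (a, b)) (u : E) :
    fderiv ℝ (fun x => Φ (x, b)) a u = fderiv ℝ Φ (a, b) (u, 0) := by
  have := (h.hasFDerivAt.comp a (hasFDerivAt_prodMk_left (𝕜 := ℝ) a b)).fderiv
  rw [show (fun x => Φ (x, b)) = Φ ∘ fun e => (e, b) from rfl, this]; rfl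

private lemma my_partial_snd {Φ : E × F → G} {a : E} {b : F}
    (h : DifferentiableAt ℝ Φ (a, b)) (u : F) :
    fderiv ℝ (fun y => Φ (a, y)) b u = fderiv ℝ Φ (a, b) (0, u) := by
  have := (h.hasFDerivAt.comp b (hasFDerivAt_prodMk_right (𝕜 := ℝ) a b)).fderiv
  rw [show (fun y => Φ (a, y)) = Φ ∘ Prod.mk a from rfl, this]; rfl

private lemma my_clm_split (L : E × F →L[ℝ] G) (w : E × F) :
    L w = L (w.1, 0) + L (0, w.2) := by
  rw [← map_add]; congr 1; ext <;> simp

private lemma my_second (Φ : E × F → ℝ) (hΦ : ContDiff ℝ (⊤ : ℕ∞) Φ) {f : G → E × F} {x : G}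
    {f' : G →L[ℝ] E × F} (hf : HasFDerivAt f f' x) (w : E × F) :
    HasFDerivAt (fun a => fderiv ℝ Φ (f a) w)
      ((ContinuousLinearMap.apply ℝ ℝ w).comp ((fderiv ℝ (fderiv ℝ Φ) (f x)).comp f')) x := by
  have hΦ' : Differentiable ℝ (fderiv ℝ Φ) :=
    (hΦ.fderiv_right (m := 1) (WithTop.coe_le_coe.mpr le_top)).differentiable one_ne_zero
  exact (ContinuousLinearMap.apply ℝ ℝ w).hasFDerivAt.comp x
    (((hΦ' (f x)).hasFDerivAt).comp x hf)

private lemma my_second_apply (Φ : E × F → ℝ) (hΦ : ContDiff ℝ (⊤ : ℕ∞) Φ) {f : G → E × F} {x : G}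
    {f' : G →L[ℝ] E × F} (hf : HasFDerivAt f f' x) (w : E × F) (u : G) :
    fderiv ℝ (fun a => fderiv ℝ Φ (f a) w) x u = fderiv ℝ (fderiv ℝ Φ) (f x) (f' u) w := by
  rw [(my_second Φ hΦ hf w).fderiv]; rfl

end Helpers

private lemma my_pi_expand {d : ℕ} (v : Fin d → ℝ) :
    v = ∑ k, v k • (Pi.single k 1 : Fin d → ℝ) := by
  funext j
  rw [Finset.sum_apply]
  simp [Pi.single_apply]

private lemma my_sum_left {d : ℕ} {F : Type*} [NormedAddCommGroup F] [NormedSpace ℝ F]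
    (D : ((Fin d → ℝ) × F) →L[ℝ] (((Fin d → ℝ) × F) →L[ℝ] ℝ)) (v : Fin d → ℝ)
    (w : (Fin d → ℝ) × F) :
    D (v, 0) w = ∑ k, v k * D (Pi.single k 1, 0) w := by
  conv_lhs => rw [show D (v, (0 : F)) w = ((D.comp (inl ℝ (Fin d → ℝ) F)) v) w from rfl,
    my_pi_expand v]
  rw [map_sum, ContinuousLinearMap.sum_apply]
  simp [smul_eq_mul]

private lemma my_sum_right {d : ℕ} {F : Type*} [NormedAddCommGroup F] [NormedSpace ℝ F]
    (D : (F × (Fin d → ℝ)) →L[ℝ] ((F × (Fin d → ℝ)) →L[ℝ] ℝ)) (v : Fin d → ℝ)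
    (w : F × (Fin d → ℝ)) :
    D (0, v) w = ∑ k, v k * D (0, Pi.single k 1) w := by
  conv_lhs => rw [show D ((0 : F), v) w = ((D.comp (inr ℝ F (Fin d → ℝ))) v) w from rfl,
    my_pi_expand v]
  rw [map_sum, ContinuousLinearMap.sum_apply]
  simp [smul_eq_mul]

/-- determinant composition identity for Hamilton principal functions:
`|det ∂²(−S)/∂q₀∂q₁| = |det ∂²(−S₀)/∂q₀∂q| · |det ∂²(−S₁)/∂q∂q₁| · |det ∂²[S₀+S₁]/∂q²|⁻¹`
at the nondegenerate critical point `q_cp`; in particular if the two mixed Hessians are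
invertible then so is `∂²S/∂q₀∂q₁`. -/
theorem stmt_17 {d : ℕ}
    (S₀ S₁ : (Fin d → ℝ) → (Fin d → ℝ) → ℝ)
    (qcp : (Fin d → ℝ) → (Fin d → ℝ) → (Fin d → ℝ))
    (hS₀ : ContDiff ℝ (⊤ : ℕ∞) (fun p : (Fin d → ℝ) × (Fin d → ℝ) => S₀ p.1 p.2))
    (hS₁ : ContDiff ℝ (⊤ : ℕ∞) (fun p : (Fin d → ℝ) × (Fin d → ℝ) => S₁ p.1 p.2))
    (hqcp : ContDiff ℝ (⊤ : ℕ∞) (fun p : (Fin d → ℝ) × (Fin d → ℝ) => qcp p.1 p.2))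
    (hcrit : ∀ q₀ q₁,
      fderiv ℝ (fun q => S₀ q₀ q + S₁ q q₁) (qcp q₀ q₁) = 0)
    (hH : ∀ q₀ q₁, IsUnit (Matrix.of fun k l : Fin d =>
      fderiv ℝ (fun q => fderiv ℝ (fun q' => S₀ q₀ q' + S₁ q' q₁) q (Pi.single l 1))
        (qcp q₀ q₁) (Pi.single k 1))) :
    ∀ q₀ q₁ : Fin d → ℝ,
      |(Matrix.of fun i j : Fin d =>
          fderiv ℝ (fun a =>
              fderiv ℝ (fun b => -(S₀ a (qcp a b) + S₁ (qcp a b) b)) q₁ (Pi.single j 1))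
            q₀ (Pi.single i 1)).det| =
        |(Matrix.of fun i l : Fin d =>
            fderiv ℝ (fun a => fderiv ℝ (fun q => -(S₀ a q)) (qcp q₀ q₁) (Pi.single l 1))
              q₀ (Pi.single i 1)).det| *
        |(Matrix.of fun k j : Fin d =>
            fderiv ℝ (fun q => fderiv ℝ (fun b => -(S₁ q b)) q₁ (Pi.single j 1))
              (qcp q₀ q₁) (Pi.single k 1)).det| *
        |(Matrix.of fun k l : Fin d =>
            fderiv ℝ (fun q =>
                fderiv ℝ (fun q' => S₀ q₀ q' + S₁ q' q₁) q (Pi.single l 1))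
              (qcp q₀ q₁) (Pi.single k 1)).det|⁻¹ ∧
      (IsUnit (Matrix.of fun i l : Fin d =>
            fderiv ℝ (fun a => fderiv ℝ (fun q => -(S₀ a q)) (qcp q₀ q₁) (Pi.single l 1))
              q₀ (Pi.single i 1)).det →
        IsUnit (Matrix.of fun k j : Fin d =>
            fderiv ℝ (fun q => fderiv ℝ (fun b => -(S₁ q b)) q₁ (Pi.single j 1))
              (qcp q₀ q₁) (Pi.single k 1)).det →
        IsUnit (Matrix.of fun i j : Fin d =>
            fderiv ℝ (fun a =>
                fderiv ℝ (fun b => -(S₀ a (qcp a b) + S₁ (qcp a b) b)) q₁ (Pi.single j 1))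
              q₀ (Pi.single i 1)).det) := by
  intro q₀ q₁
  classical
  -- notation
  let E := (Fin d → ℝ)
  let e : Fin d → E := fun i => Pi.single i 1
  set F₀ : E × E → ℝ := fun p => S₀ p.1 p.2 with hF₀def
  set F₁ : E × E → ℝ := fun p => S₁ p.1 p.2 with hF₁def
  have DF₀ : Differentiable ℝ F₀ := hS₀.differentiable (by simp)
  have DF₁ : Differentiable ℝ F₁ := hS₁.differentiable (by simp)
  have Dq : Differentiable ℝ (fun p : E × E => qcp p.1 p.2) := hqcp.differentiable (by simp)
  set c : E := qcp q₀ q₁ with hc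
  -- second derivative bilinear objects
  set D₀ := fderiv ℝ (fderiv ℝ F₀) (q₀, c) with hD₀
  set D₁ := fderiv ℝ (fderiv ℝ F₁) (c, q₁) with hD₁
  -- the jacobian of a ↦ qcp a q₁ at q₀
  have Dq1 : Differentiable ℝ (fun a : E => qcp a q₁) := by
    have : (fun a : E => qcp a q₁) = (fun p : E × E => qcp p.1 p.2) ∘ (fun a => (a, q₁)) := rfl
    rw [this]
    exact Dq.comp (differentiable_id.prodMk (differentiable_const q₁))
  set K : E →L[ℝ] E := fderiv ℝ (fun a : E => qcp a q₁) q₀ with hKdef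
  have hK : HasFDerivAt (fun a : E => qcp a q₁) K q₀ := (Dq1 q₀).hasFDerivAt
  -- matrices
  set Mmat : Matrix (Fin d) (Fin d) ℝ := Matrix.of fun i j : Fin d =>
      fderiv ℝ (fun a =>
          fderiv ℝ (fun b => -(S₀ a (qcp a b) + S₁ (qcp a b) b)) q₁ (Pi.single j 1))
        q₀ (Pi.single i 1) with hMmat
  set Amat : Matrix (Fin d) (Fin d) ℝ := Matrix.of fun i l : Fin d =>
      fderiv ℝ (fun a => fderiv ℝ (fun q => -(S₀ a q)) c (Pi.single l 1))
        q₀ (Pi.single i 1) with hAmat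
  set Bmat : Matrix (Fin d) (Fin d) ℝ := Matrix.of fun k j : Fin d =>
      fderiv ℝ (fun q => fderiv ℝ (fun b => -(S₁ q b)) q₁ (Pi.single j 1))
        c (Pi.single k 1) with hBmat
  set Hmat : Matrix (Fin d) (Fin d) ℝ := Matrix.of fun k l : Fin d =>
      fderiv ℝ (fun q => fderiv ℝ (fun q' => S₀ q₀ q' + S₁ q' q₁) q (Pi.single l 1))
        c (Pi.single k 1) with hHmat
  let Jmat : Matrix (Fin d) (Fin d) ℝ := Matrix.of fun i k : Fin d => K (e i) k
  -- partial derivative splitting of the critical equation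
  have hsum : ∀ (a b z : E) (u : E),
      fderiv ℝ (fun q' => S₀ a q' + S₁ q' b) z u
        = fderiv ℝ F₀ (a, z) (0, u) + fderiv ℝ F₁ (z, b) (u, 0) := by
    intro a b z u
    have d1 : DifferentiableAt ℝ (fun q' : E => S₀ a q') z :=
      (DF₀ (a, z)).comp z ((differentiableAt_const a).prodMk differentiableAt_id)
    have d2 : DifferentiableAt ℝ (fun q' : E => S₁ q' b) z :=
      by have := (DF₁ (z, b)).comp z ((differentiableAt_id (𝕜 := ℝ) (x := z)).prodMk (differentiableAt_const b)); exact this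
    have h1 : fderiv ℝ (fun q' : E => S₀ a q') z u = fderiv ℝ F₀ (a, z) (0, u) :=
      my_partial_snd (DF₀ (a, z)) u
    have h2 : fderiv ℝ (fun q' : E => S₁ q' b) z u = fderiv ℝ F₁ (z, b) (u, 0) :=
      my_partial_fst (DF₁ (z, b)) u
    rw [fderiv_fun_add d1 d2, ContinuousLinearMap.add_apply, h1, h2]
  have hcrit' : ∀ (a b : E) (u : E),
      fderiv ℝ F₀ (a, qcp a b) (0, u) + fderiv ℝ F₁ (qcp a b, b) (u, 0) = 0 := by
    intro a b u
    rw [← hsum a b (qcp a b) u, hcrit a b]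
    rfl
  -- expansion of vectors in the canonical basis
  have hexp : ∀ v : E, v = ∑ k, v k • e k := fun v => my_pi_expand v
  ----------------------------------------------------------------
  -- Entrywise formulas for the matrices in terms of D₀, D₁
  ----------------------------------------------------------------
  have hAval : ∀ i l, Amat i l = -(D₀ (e i, 0) (0, e l)) := by
    intro i l
    have h1 : (fun a => fderiv ℝ (fun q => -(S₀ a q)) c (Pi.single l 1))
        = fun a => -(fderiv ℝ F₀ (a, c) (0, e l)) := by
      funext a
      rw [fderiv_fun_neg, ContinuousLinearMap.neg_apply]
      congr 1
      exact my_partial_snd (DF₀ (a, c)) (Pi.single l 1)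
    have h2 : fderiv ℝ (fun a => -(fderiv ℝ F₀ (a, c) (0, e l))) q₀ (Pi.single i 1)
        = -(fderiv ℝ (fun a => fderiv ℝ F₀ (a, c) (0, e l)) q₀ (Pi.single i 1)) := by
      rw [fderiv_fun_neg, ContinuousLinearMap.neg_apply]
    have h3 : fderiv ℝ (fun a => fderiv ℝ F₀ (a, c) (0, e l)) q₀ (Pi.single i 1)
        = D₀ (e i, 0) (0, e l) :=
      my_second_apply F₀ hS₀ (hasFDerivAt_prodMk_left q₀ c) (0, e l) (Pi.single i 1)
    show fderiv ℝ (fun a => fderiv ℝ (fun q => -(S₀ a q)) c (Pi.single l 1))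
        q₀ (Pi.single i 1) = _
    rw [h1, h2, h3]
  have hBval : ∀ k j, Bmat k j = -(D₁ (e k, 0) (0, e j)) := by
    intro k j
    have h1 : (fun q => fderiv ℝ (fun b => -(S₁ q b)) q₁ (Pi.single j 1))
        = fun q => -(fderiv ℝ F₁ (q, q₁) (0, e j)) := by
      funext q
      rw [fderiv_fun_neg, ContinuousLinearMap.neg_apply]
      congr 1
      exact my_partial_snd (DF₁ (q, q₁)) (Pi.single j 1)
    have h2 : fderiv ℝ (fun q => -(fderiv ℝ F₁ (q, q₁) (0, e j))) c (Pi.single k 1)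
        = -(fderiv ℝ (fun q => fderiv ℝ F₁ (q, q₁) (0, e j)) c (Pi.single k 1)) := by
      rw [fderiv_fun_neg, ContinuousLinearMap.neg_apply]
    have h3 : fderiv ℝ (fun q => fderiv ℝ F₁ (q, q₁) (0, e j)) c (Pi.single k 1)
        = D₁ (e k, 0) (0, e j) :=
      my_second_apply F₁ hS₁ (hasFDerivAt_prodMk_left c q₁) (0, e j) (Pi.single k 1)
    show fderiv ℝ (fun q => fderiv ℝ (fun b => -(S₁ q b)) q₁ (Pi.single j 1))
        c (Pi.single k 1) = _
    rw [h1, h2, h3]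
  have hHval : ∀ k l, Hmat k l = D₀ (0, e k) (0, e l) + D₁ (e k, 0) (e l, 0) := by
    intro k l
    have h1 : (fun q => fderiv ℝ (fun q' => S₀ q₀ q' + S₁ q' q₁) q (Pi.single l 1))
        = fun q => fderiv ℝ F₀ (q₀, q) (0, e l) + fderiv ℝ F₁ (q, q₁) (e l, 0) := by
      funext q
      exact hsum q₀ q₁ q (Pi.single l 1)
    have ht1 := my_second F₀ hS₀ (hasFDerivAt_prodMk_right q₀ c) ((0 : E), e l)
    have ht2 := my_second F₁ hS₁ (hasFDerivAt_prodMk_left c q₁) (e l, (0 : E))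
    have h2 := (ht1.fun_add ht2).fderiv
    show fderiv ℝ (fun q => fderiv ℝ (fun q' => S₀ q₀ q' + S₁ q' q₁) q (Pi.single l 1))
        c (Pi.single k 1) = _
    rw [h1]
    calc fderiv ℝ (fun q => fderiv ℝ F₀ (q₀, q) (0, e l) + fderiv ℝ F₁ (q, q₁) (e l, 0))
          c (Pi.single k 1)
        = fderiv ℝ (fun q => fderiv ℝ F₀ ((fun q : E => (q₀, q)) q) (0, e l)
            + fderiv ℝ F₁ ((fun q : E => (q, q₁)) q) (e l, 0)) c (Pi.single k 1) := rfl
      _ = D₀ (0, e k) (0, e l) + D₁ (e k, 0) (e l, 0) := by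
          rw [h2]; rfl
  ----------------------------------------------------------------
  -- M = J * B
  ----------------------------------------------------------------
  have hMval : ∀ i j, Mmat i j = -(D₁ (K (e i), 0) (0, e j)) := by
    intro i j
    -- first, the inner derivative simplifies using criticality
    have hpsi : (fun a => fderiv ℝ (fun b => -(S₀ a (qcp a b) + S₁ (qcp a b) b)) q₁
          (Pi.single j 1))
        = fun a => -(fderiv ℝ F₁ (qcp a q₁, q₁) (0, e j)) := by
      funext a
      have Dq2 : Differentiable ℝ (fun b : E => qcp a b) := by
        have : (fun b : E => qcp a b)
            = (fun p : E × E => qcp p.1 p.2) ∘ (fun b => (a, b)) := rfl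
        rw [this]
        exact Dq.comp ((differentiable_const a).prodMk differentiable_id)
      set Ka : E →L[ℝ] E := fderiv ℝ (fun b : E => qcp a b) q₁ with hKa
      have hKa' : HasFDerivAt (fun b : E => qcp a b) Ka q₁ := (Dq2 q₁).hasFDerivAt
      set qa : E := qcp a q₁ with hqa
      have hg1 : HasFDerivAt (fun p : E × E => S₀ a p.1)
          ((fderiv ℝ F₀ (a, qa)).comp ((inr ℝ E E).comp (fst ℝ E E))) (qa, q₁) :=
        by have := (DF₀ (a, qa)).hasFDerivAt.comp (qa, q₁)
             ((hasFDerivAt_prodMk_right (𝕜 := ℝ) a qa).comp (qa, q₁)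
               (hasFDerivAt_fst (𝕜 := ℝ) (E := E) (F := E) (p := (qa, q₁)))); exact this
      have hg2 : HasFDerivAt F₁ (fderiv ℝ F₁ (qa, q₁)) (qa, q₁) :=
        (DF₁ (qa, q₁)).hasFDerivAt
      have hk : HasFDerivAt (fun b : E => (qcp a b, b))
          (Ka.prod (ContinuousLinearMap.id ℝ E)) q₁ :=
        hKa'.prodMk (hasFDerivAt_id q₁)
      have htot : HasFDerivAt (fun b : E => S₀ a (qcp a b) + S₁ (qcp a b) b)
          (((fderiv ℝ F₀ (a, qa)).comp ((inr ℝ E E).comp (fst ℝ E E))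
              + fderiv ℝ F₁ (qa, q₁)).comp (Ka.prod (ContinuousLinearMap.id ℝ E))) q₁ := by
        have := (hg1.add hg2).comp (f := fun b : E => (qcp a b, b)) q₁ hk
        exact this
      have happ : (((fderiv ℝ F₀ (a, qa)).comp ((inr ℝ E E).comp (fst ℝ E E))
              + fderiv ℝ F₁ (qa, q₁)).comp (Ka.prod (ContinuousLinearMap.id ℝ E)))
            (Pi.single j 1)
          = fderiv ℝ F₁ (qa, q₁) (0, e j) := by
        have hsplit : fderiv ℝ F₁ (qa, q₁) (Ka (e j), e j)
            = fderiv ℝ F₁ (qa, q₁) (Ka (e j), 0) + fderiv ℝ F₁ (qa, q₁) (0, e j) :=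
          my_clm_split _ (Ka (e j), e j)
        have hzero := hcrit' a q₁ (Ka (e j))
        show fderiv ℝ F₀ (a, qa) (0, Ka (e j)) + fderiv ℝ F₁ (qa, q₁) (Ka (e j), e j) = _
        rw [hsplit, ← add_assoc, hzero, zero_add]
      rw [fderiv_fun_neg, ContinuousLinearMap.neg_apply, htot.fderiv, happ]
    show fderiv ℝ (fun a => fderiv ℝ (fun b => -(S₀ a (qcp a b) + S₁ (qcp a b) b)) q₁
        (Pi.single j 1)) q₀ (Pi.single i 1) = _
    rw [hpsi, fderiv_fun_neg, ContinuousLinearMap.neg_apply]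
    congr 1
    have hf : HasFDerivAt (fun a : E => (qcp a q₁, q₁))
        (K.prod (0 : E →L[ℝ] E)) q₀ := hK.prodMk (hasFDerivAt_const q₁ q₀)
    exact my_second_apply F₁ hS₁ hf ((0 : E), e j) (Pi.single i 1)
  ----------------------------------------------------------------
  -- implicit differentiation of the critical-point equation
  ----------------------------------------------------------------
  have hAJH : ∀ i l, D₀ (e i, 0) (0, e l) + D₀ (0, K (e i)) (0, e l)
      + D₁ (K (e i), 0) (e l, 0) = 0 := by
    intro i l
    have hf1 : HasFDerivAt (fun a : E => (a, qcp a q₁))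
        ((ContinuousLinearMap.id ℝ E).prod K) q₀ := (hasFDerivAt_id q₀).prodMk hK
    have hf2 : HasFDerivAt (fun a : E => (qcp a q₁, q₁))
        (K.prod (0 : E →L[ℝ] E)) q₀ := hK.prodMk (hasFDerivAt_const q₁ q₀)
    have ht1 : HasFDerivAt (fun a : E => fderiv ℝ F₀ (a, qcp a q₁) (0, e l))
        ((ContinuousLinearMap.apply ℝ ℝ ((0 : E), e l)).comp
          (D₀.comp ((ContinuousLinearMap.id ℝ E).prod K))) q₀ :=
      my_second F₀ hS₀ hf1 ((0 : E), e l)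
    have ht2 : HasFDerivAt (fun a : E => fderiv ℝ F₁ (qcp a q₁, q₁) (e l, 0))
        ((ContinuousLinearMap.apply ℝ ℝ (e l, (0 : E))).comp
          (D₁.comp (K.prod (0 : E →L[ℝ] E)))) q₀ :=
      my_second F₁ hS₁ hf2 (e l, (0 : E))
    have hL : ((ContinuousLinearMap.apply ℝ ℝ ((0 : E), e l)).comp
          (D₀.comp ((ContinuousLinearMap.id ℝ E).prod K)))
        + ((ContinuousLinearMap.apply ℝ ℝ (e l, (0 : E))).comp
          (D₁.comp (K.prod (0 : E →L[ℝ] E)))) = 0 := by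
      have h1 : HasFDerivAt (fun a : E => fderiv ℝ F₀ (a, qcp a q₁) (0, e l)
          + fderiv ℝ F₁ (qcp a q₁, q₁) (e l, 0))
          (((ContinuousLinearMap.apply ℝ ℝ ((0 : E), e l)).comp
            (D₀.comp ((ContinuousLinearMap.id ℝ E).prod K)))
          + ((ContinuousLinearMap.apply ℝ ℝ (e l, (0 : E))).comp
            (D₁.comp (K.prod (0 : E →L[ℝ] E))))) q₀ := ht1.add ht2
      have h2 : HasFDerivAt (fun a : E => fderiv ℝ F₀ (a, qcp a q₁) (0, e l)
          + fderiv ℝ F₁ (qcp a q₁, q₁) (e l, 0)) (0 : E →L[ℝ] ℝ) q₀ := by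
        have heq : (fun a : E => fderiv ℝ F₀ (a, qcp a q₁) (0, e l)
            + fderiv ℝ F₁ (qcp a q₁, q₁) (e l, 0)) = fun _ => (0 : ℝ) :=
          funext fun a => hcrit' a q₁ (e l)
        rw [heq]
        exact hasFDerivAt_const 0 q₀
      exact h1.unique h2
    have happ := congrArg (fun (L : E →L[ℝ] ℝ) => L (e i)) hL
    have hsplit : D₀ (e i, K (e i)) (0, e l)
        = D₀ (e i, 0) (0, e l) + D₀ (0, K (e i)) (0, e l) := by
      rw [← ContinuousLinearMap.add_apply, ← my_clm_split D₀ (e i, K (e i))]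
    calc D₀ (e i, 0) (0, e l) + D₀ (0, K (e i)) (0, e l) + D₁ (K (e i), 0) (e l, 0)
        = D₀ (e i, K (e i)) (0, e l) + D₁ (K (e i), 0) (e l, 0) := by rw [hsplit]
      _ = 0 := happ
  ----------------------------------------------------------------
  -- matrix identities
  ----------------------------------------------------------------
  have hAmul : Amat = Jmat * Hmat := by
    ext i l
    rw [Matrix.mul_apply]
    have h1 := hAJH i l
    have h2 : Amat i l = D₀ (0, K (e i)) (0, e l) + D₁ (K (e i), 0) (e l, 0) := by
      rw [hAval i l]; linarith
    rw [h2, my_sum_right D₀ (K (e i)) ((0 : E), e l),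
      my_sum_left D₁ (K (e i)) (e l, (0 : E)), ← Finset.sum_add_distrib]
    refine Finset.sum_congr rfl fun k _ => ?_
    have hJ : Jmat i k = K (e i) k := rfl
    rw [hHval k l, hJ]
    ring
  have hMmul : Mmat = Jmat * Bmat := by
    ext i j
    rw [Matrix.mul_apply, hMval i j, my_sum_left D₁ (K (e i)) ((0 : E), e j),
      ← Finset.sum_neg_distrib]
    refine Finset.sum_congr rfl fun k _ => ?_
    have hJ : Jmat i k = K (e i) k := rfl
    rw [hBval k j, hJ]
    ring
  ----------------------------------------------------------------
  -- determinant bookkeeping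
  ----------------------------------------------------------------
  have hdetH : Hmat.det ≠ 0 := by
    have h := (Matrix.isUnit_iff_isUnit_det _).mp (hH q₀ q₁)
    rw [← hc] at h
    exact isUnit_iff_ne_zero.mp h
  have hMdet : Mmat.det = Jmat.det * Bmat.det := by rw [hMmul, Matrix.det_mul]
  have hAdet : Amat.det = Jmat.det * Hmat.det := by rw [hAmul, Matrix.det_mul]
  constructor
  · rw [hMdet, hAdet, abs_mul, abs_mul]
    have hH0 : |Hmat.det| ≠ 0 := abs_ne_zero.mpr hdetH
    field_simp
  · intro hA hB
    have hA' : Amat.det ≠ 0 := isUnit_iff_ne_zero.mp hA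
    have hB' : Bmat.det ≠ 0 := isUnit_iff_ne_zero.mp hB
    have hJ : Jmat.det ≠ 0 := fun h => hA' (by rw [hAdet, h, zero_mul])
    exact isUnit_iff_ne_zero.mpr (by rw [hMdet]; exact mul_ne_zero hJ hB')
end
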